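/- Let F : 2^V → ℝ be monotone (F(A) ≤ F(B) whenever A ⊆ B) and submodular (F(A) + F(B) ≥ F(A∪B) + F(A∩B) for all A, B ⊆ V) with F(∅) = 0 and F(A) > 0 for nonempty A, and define Θ_∞(w) = inf{ Σ_{S⊆V} α_S F(S) : α_S ≥ 0, Σ_{S⊆V} α_S = 1, Σ_{S : i∈S} α_S ≥ |w_i| ∀i } (with inf ∅ = ∞). If J ⊆ V is weakly stable with respect to Θ_∞, in the sense that there exists w ∈ ℝ^V with supp(w) = J and ‖w‖_∞ ≤ 1 such that Θ_∞ is decomposable at w with respect to J, then J is weakly stable with respect to F: F(J ∪ {i}) > F(J) for every i ∉ J. -/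

import Mathlib

/-!
Suppose `F (J ∪ {i}) = F J` for some `i ∉ J`. For `g ≥ 0` listed in increasing order, the Lovász
extension `f(g)` of `F` bounds `Θ_∞` from both sides: the greedy inequality (submodularity)
gives `f(|w|) ≤ Θ_∞(w)`, and the chain of upper level sets of `|u|` is a certificate showing
`Θ_∞(u) ≤ f(|u|)` when `‖u‖_∞ ≤ 1`. Raising `wᵢ` from `0` to some `t ∈ (0, min_{j ∈ J} |wⱼ|]`
puts `i` at the bottom of the chain, so `f` changes by `t (F (J ∪ {i}) - F J) = 0`. Hence
`Θ_∞(w + t 1_{i}) ≤ Θ_∞(w) < ∞`, contradicting decomposability, which demands an increase of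
at least `M t > 0`.
-/
open scoped BigOperators ENNReal

/-- The non-homogeneous `ℓ∞`-relaxation `Θ_∞` with values in `[0,∞]` (`sInf ∅ = ∞`). -/
noncomputable def thetaInfE {V : Type*} [Fintype V] [DecidableEq V]
    (F : Finset V → ℝ) (w : V → ℝ) : ℝ≥0∞ :=
  sInf { t : ℝ≥0∞ | ∃ α : Finset V → ℝ,
    (∀ S, 0 ≤ α S) ∧ (∑ S : Finset V, α S) = 1 ∧
    (∀ i : V, |w i| ≤ ∑ S : Finset V, if i ∈ S then α S else 0) ∧
    t = ENNReal.ofReal (∑ S : Finset V, α S * F S) }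

theorem Finset.exists_between_forall_le {V β : Type*} [LinearOrder β] {a c : β} (hac : a < c)
    (s : Finset V) {f : V → β} (hf : ∀ j ∈ s, a < f j) :
    ∃ t, a < t ∧ t ≤ c ∧ ∀ j ∈ s, t ≤ f j := by
  classical
  induction s using Finset.induction_on with
  | empty => exact ⟨c, hac, le_rfl, by simp⟩
  | insert j s _ ih =>
    obtain ⟨t, hat, htc, hts⟩ := ih fun k hk => hf k (mem_insert_of_mem hk)
    refine ⟨min t (f j), lt_min hat (hf j (mem_insert_self j s)), (min_le_left _ _).trans htc, ?_⟩
    rw [forall_mem_insert]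
    exact ⟨min_le_right _ _, fun k hk => (min_le_left _ _).trans (hts k hk)⟩

theorem Finset.exists_nodup_toFinset_eq_pairwise_le {V β : Type*} [DecidableEq V] [LinearOrder β]
    (s : Finset V) (f : V → β) :
    ∃ L : List V, L.Nodup ∧ L.toFinset = s ∧ L.Pairwise fun a b => f a ≤ f b := by
  have hperm := s.toList.mergeSort_perm fun a b => decide (f a ≤ f b)
  refine ⟨_, hperm.nodup_iff.2 s.nodup_toList, by
    rw [List.toFinset_eq_of_perm _ _ hperm, Finset.toList_toFinset], ?_⟩
  simpa using s.toList.pairwise_mergeSort (le := fun a b => decide (f a ≤ f b))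
    (fun a b c hab hbc => by simp_all only [decide_eq_true_eq]; exact hab.trans hbc)
    (fun a b => by simpa using le_total (f a) (f b))

section Lovasz

variable {V : Type*} [DecidableEq V] (F : Finset V → ℝ)

/-- `lovaszSum F g [x₀, …, xₘ₋₁] = ∑ₙ g xₙ * (F {xₙ, …, xₘ₋₁} - F {xₙ₊₁, …, xₘ₋₁})`. When `L` lists
the support of `g ≥ 0` in increasing order of `g`, this is the Lovász extension of `F` at `g`. -/
def lovaszSum (g : V → ℝ) : List V → ℝ
  | [] => 0
  | x :: L => g x * (F (insert x L.toFinset) - F L.toFinset) + lovaszSum g L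

variable {F}

theorem lovaszSum_congr {g g' : V → ℝ} {L : List V} (h : ∀ x ∈ L, g x = g' x) :
    lovaszSum F g L = lovaszSum F g' L := by
  induction L with
  | nil => rfl
  | cons x L ih =>
    simp only [lovaszSum, h x List.mem_cons_self,
      ih fun y hy => h y (List.mem_cons_of_mem x hy)]

theorem lovaszSum_sub_const (g : V → ℝ) (a : ℝ) (L : List V) :
    lovaszSum F (fun x => g x - a) L = lovaszSum F g L - a * (F L.toFinset - F ∅) := by
  induction L with
  | nil => simp [lovaszSum]
  | cons x L ih => simp only [lovaszSum, ih, List.toFinset_cons]; ring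

theorem lovaszSum_sum_mul {ι : Type*} (s : Finset ι) (c : ι → ℝ) (g : ι → V → ℝ) (L : List V) :
    lovaszSum F (fun x => ∑ k ∈ s, c k * g k x) L = ∑ k ∈ s, c k * lovaszSum F (g k) L := by
  induction L with
  | nil => simp [lovaszSum]
  | cons x L ih =>
    simp only [lovaszSum, ih, Finset.sum_mul, mul_add, mul_assoc, Finset.sum_add_distrib]

theorem lovaszSum_mono (hmono : Monotone F) {g g' : V → ℝ} {L : List V}
    (h : ∀ x ∈ L, g x ≤ g' x) : lovaszSum F g L ≤ lovaszSum F g' L := by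
  induction L with
  | nil => rfl
  | cons x L ih =>
    have hinc : 0 ≤ F (insert x L.toFinset) - F L.toFinset :=
      sub_nonneg.2 (hmono (Finset.subset_insert x _))
    exact add_le_add (mul_le_mul_of_nonneg_right (h x List.mem_cons_self) hinc)
      (ih fun y hy => h y (List.mem_cons_of_mem x hy))

theorem lovaszSum_indicator_le (hF0 : F ∅ = 0)
    (hsub : ∀ A B : Finset V, F (A ∪ B) + F (A ∩ B) ≤ F A + F B) (A : Finset V) {L : List V}
    (hL : L.Nodup) : lovaszSum F (fun x => if x ∈ A then 1 else 0) L ≤ F (A ∩ L.toFinset) := by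
  induction L with
  | nil => simp [lovaszSum, hF0]
  | cons x L ih =>
    obtain ⟨hxL, hL⟩ := List.nodup_cons.1 hL
    replace hxL : x ∉ L.toFinset := by simpa using hxL
    specialize ih hL
    set S := L.toFinset
    simp only [lovaszSum, List.toFinset_cons]
    by_cases hxA : x ∈ A
    · have h := hsub (insert x (A ∩ S)) S
      rw [Finset.insert_union, Finset.union_eq_right.2 Finset.inter_subset_right,
        Finset.insert_inter_of_notMem hxL, Finset.inter_assoc, Finset.inter_self] at h
      rw [if_pos hxA, Finset.inter_insert_of_mem hxA]
      linarith
    · rw [if_neg hxA, Finset.inter_insert_of_notMem hxA]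
      linarith

end Lovasz

section Theta

variable {V : Type*} [Fintype V] [DecidableEq V] {F : Finset V → ℝ}

theorem ofReal_lovaszSum_le_thetaInfE (hF0 : F ∅ = 0) (hmono : Monotone F)
    (hsub : ∀ A B : Finset V, F (A ∪ B) + F (A ∩ B) ≤ F A + F B) (w : V → ℝ) {L : List V}
    (hL : L.Nodup) : ENNReal.ofReal (lovaszSum F (fun x => |w x|) L) ≤ thetaInfE F w := by
  refine le_sInf ?_
  rintro _ ⟨α, hα0, -, hcov, rfl⟩
  refine ENNReal.ofReal_le_ofReal ?_
  calc lovaszSum F (fun x => |w x|) L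
      ≤ lovaszSum F (fun x => ∑ S, α S * if x ∈ S then 1 else 0) L :=
        lovaszSum_mono hmono fun x _ => by simpa only [mul_ite, mul_one, mul_zero] using hcov x
    _ = ∑ S, α S * lovaszSum F (fun x => if x ∈ S then 1 else 0) L := lovaszSum_sum_mul _ _ _ _
    _ ≤ ∑ S, α S * F S := Finset.sum_le_sum fun S _ => mul_le_mul_of_nonneg_left
        ((lovaszSum_indicator_le hF0 hsub S hL).trans (hmono Finset.inter_subset_left)) (hα0 S)

/-- The chain certificate: weight `g x₀` on `{x₀, …, xₘ₋₁}`, `g xₙ - g xₙ₋₁` on `{xₙ, …, xₘ₋₁}`,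
and the remaining mass on `∅`. -/
theorem exists_chain_weights (hF0 : F ∅ = 0) {g : V → ℝ} {L : List V} (hL : L.Nodup)
    (hsorted : L.Pairwise fun a b => g a ≤ g b) (hg : ∀ x ∈ L, 0 ≤ g x) {c : ℝ} (hc : 0 ≤ c)
    (hgc : ∀ x ∈ L, g x ≤ c) :
    ∃ α : Finset V → ℝ, (∀ S, 0 ≤ α S) ∧ ∑ S, α S = c ∧
      (∀ y, ∑ S with y ∈ S, α S = if y ∈ L then g y else 0) ∧
      ∑ S, α S * F S = lovaszSum F g L := by
  induction L generalizing g c with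
  | nil =>
    refine ⟨fun S => if S = ∅ then c else 0, fun S => ?_, by simp, fun y => by simp,
      by simp [hF0, lovaszSum]⟩
    dsimp only
    split_ifs <;> simp [hc]
  | cons x L ih =>
    obtain ⟨hxL, hL⟩ := List.nodup_cons.1 hL
    obtain ⟨hxle, hsorted⟩ := List.pairwise_cons.1 hsorted
    obtain ⟨α, hα0, hα1, hcov, hcost⟩ := ih (g := fun y => g y - g x) (c := c - g x) hL
      (hsorted.imp fun h => sub_le_sub_right h _) (fun y hy => sub_nonneg.2 (hxle y hy))
      (sub_nonneg.2 (hgc x List.mem_cons_self))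
      (fun y hy => sub_le_sub_right (hgc y (List.mem_cons_of_mem x hy)) _)
    set T := insert x L.toFinset
    refine ⟨fun S => α S + if S = T then g x else 0, fun S => ?_, ?_, fun y => ?_, ?_⟩
    · refine add_nonneg (hα0 S) ?_
      split_ifs <;> simp [hg x List.mem_cons_self]
    · simp [Finset.sum_add_distrib, hα1]
    · rw [Finset.sum_add_distrib, hcov]
      by_cases hyx : y = x
      · subst hyx; simp [hxL, T]
      · by_cases hyL : y ∈ L <;> simp [hyL, hyx, T]
    · simp only [add_mul, ite_mul, zero_mul, Finset.sum_add_distrib, hcost, lovaszSum_sub_const,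
        Finset.sum_ite_eq', Finset.mem_univ, if_true, lovaszSum, hF0]
      ring

theorem thetaInfE_le_ofReal_lovaszSum (hF0 : F ∅ = 0) {u : V → ℝ} {L : List V} (hL : L.Nodup)
    (hsorted : L.Pairwise fun a b => |u a| ≤ |u b|) (hu1 : ∀ x ∈ L, |u x| ≤ 1)
    (hu0 : ∀ x ∉ L, u x = 0) : thetaInfE F u ≤ ENNReal.ofReal (lovaszSum F (fun x => |u x|) L) := by
  obtain ⟨α, hα0, hα1, hcov, hcost⟩ :=
    exists_chain_weights hF0 hL hsorted (fun x _ => abs_nonneg (u x)) zero_le_one hu1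
  refine sInf_le ⟨α, hα0, hα1, fun y => ?_, by rw [hcost]⟩
  rw [← Finset.sum_filter, hcov]
  by_cases hy : y ∈ L
  · rw [if_pos hy]
  · simp [hy, hu0 y hy]

theorem thetaInfE_lt_top {w : V → ℝ} (hw1 : ∀ j, |w j| ≤ 1) : thetaInfE F w < ⊤ := by
  refine lt_of_le_of_lt (sInf_le ⟨fun S => if S = Finset.univ then 1 else 0, fun S => ?_,
    by simp, fun j => ?_, rfl⟩) ENNReal.ofReal_lt_top
  · dsimp only
    split_ifs <;> simp
  · rw [Finset.sum_eq_single Finset.univ (fun S _ hS => by simp [hS]) (by simp)]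
    simpa using hw1 j

theorem thetaInfE_add_single_le (hF0 : F ∅ = 0) (hmono : Monotone F)
    (hsub : ∀ A B : Finset V, F (A ∪ B) + F (A ∩ B) ≤ F A + F B) {J : Finset V} {i : V}
    (hi : i ∉ J) (hJ : F (insert i J) ≤ F J) {w : V → ℝ} (hsupp : ∀ j ∉ J, w j = 0)
    (hw1 : ∀ j, |w j| ≤ 1) {t : ℝ} (ht0 : 0 ≤ t) (ht1 : t ≤ 1) (htw : ∀ j ∈ J, t ≤ |w j|) :
    thetaInfE F (w + Pi.single i t) ≤ thetaInfE F w := by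
  obtain ⟨L, hL, hLJ, hsorted⟩ := J.exists_nodup_toFinset_eq_pairwise_le fun j => |w j|
  have hmemL : ∀ j, j ∈ L ↔ j ∈ J := fun j => by rw [← List.mem_toFinset, hLJ]
  have hiL : i ∉ L := by rwa [hmemL]
  set u := w + Pi.single i t
  have hui : u i = t := by simp [u, hsupp i hi]
  have hu : ∀ j ≠ i, u j = w j := fun j hj => by simp [u, hj]
  have huL : ∀ j ∈ L, u j = w j := fun j hj => hu j (ne_of_mem_of_not_mem hj hiL)
  calc thetaInfE F u ≤ ENNReal.ofReal (lovaszSum F (fun j => |u j|) (i :: L)) := by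
        refine thetaInfE_le_ofReal_lovaszSum hF0 (List.nodup_cons.2 ⟨hiL, hL⟩)
          (List.pairwise_cons.2 ⟨fun j hj => ?_, hsorted.imp_of_mem fun ha hb h => ?_⟩)
          (fun j _ => ?_) (fun j hj => ?_)
        · rw [hui, huL j hj, abs_of_nonneg ht0]; exact htw j ((hmemL j).1 hj)
        · rwa [huL _ ha, huL _ hb]
        · by_cases hj : j = i
          · rw [hj, hui, abs_of_nonneg ht0]; exact ht1
          · rw [hu j hj]; exact hw1 j
        · have hji : j ≠ i := fun h => hj (h ▸ List.mem_cons_self)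
          rw [hu j hji, hsupp j fun h => hj (List.mem_cons_of_mem i ((hmemL j).2 h))]
    _ ≤ ENNReal.ofReal (lovaszSum F (fun j => |w j|) L) := by
        refine ENNReal.ofReal_le_ofReal ?_
        rw [lovaszSum, lovaszSum_congr fun j hj => by rw [huL j hj], hLJ, hui, abs_of_nonneg ht0]
        linarith [mul_nonpos_of_nonneg_of_nonpos ht0 (sub_nonpos.2 hJ)]
    _ ≤ thetaInfE F w := ofReal_lovaszSum_le_thetaInfE hF0 hmono hsub w hL

end Theta

theorem stmt_14_general {V : Type*} [Fintype V] [DecidableEq V]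
    (F : Finset V → ℝ) (hF0 : F ∅ = 0)
    (hmono : ∀ A B : Finset V, A ⊆ B → F A ≤ F B)
    (hsub : ∀ A B : Finset V, F (A ∪ B) + F (A ∩ B) ≤ F A + F B)
    (J : Finset V)
    (hws : ∃ w : V → ℝ, (∀ i, w i ≠ 0 ↔ i ∈ J) ∧ (∀ i, |w i| ≤ 1) ∧
      ∃ M : ℝ, 0 < M ∧ ∀ Δ : V → ℝ, (∀ i ∈ J, Δ i = 0) →
        thetaInfE F w + ENNReal.ofReal (M * (⨆ i, |Δ i|)) ≤ thetaInfE F (w + Δ)) :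
    ∀ i ∉ J, F J < F (insert i J) := by
  intro i hi
  by_contra! hJ
  obtain ⟨w, hsupp, hw1, M, hM, hdec⟩ := hws
  obtain ⟨t, ht0, ht1, htw⟩ := J.exists_between_forall_le zero_lt_one
    fun j hj => abs_pos.2 ((hsupp j).2 hj)
  have hnogain : thetaInfE F (w + Pi.single i t) ≤ thetaInfE F w :=
    thetaInfE_add_single_le hF0 hmono hsub hi hJ (fun j hj => not_not.1 (mt (hsupp j).1 hj))
      hw1 ht0.le ht1 htw
  have hgain := hdec (Pi.single i t) fun j hj => Pi.single_eq_of_ne (ne_of_mem_of_not_mem hj hi) _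
  have hzero : ENNReal.ofReal (M * ⨆ j, |Pi.single i t j|) ≤ 0 :=
    ENNReal.le_of_add_le_add_left (thetaInfE_lt_top hw1).ne
      (by rw [add_zero]; exact hgain.trans hnogain)
  have ht_le : t ≤ ⨆ j, |Pi.single i t j| :=
    le_ciSup_of_le (Set.finite_range _).bddAbove i (by simp [abs_of_pos ht0])
  exact (mul_pos hM (ht0.trans_le ht_le)).not_ge
    (ENNReal.ofReal_eq_zero.1 (nonpos_iff_eq_zero.1 hzero))

theorem stmt_14 {V : Type*} [Fintype V] [DecidableEq V]
    (F : Finset V → ℝ) (hF0 : F ∅ = 0) (hFpos : ∀ A : Finset V, A.Nonempty → 0 < F A)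
    (hmono : ∀ A B : Finset V, A ⊆ B → F A ≤ F B)
    (hsub : ∀ A B : Finset V, F (A ∪ B) + F (A ∩ B) ≤ F A + F B)
    (J : Finset V)
    (hws : ∃ w : V → ℝ, (∀ i, w i ≠ 0 ↔ i ∈ J) ∧ (∀ i, |w i| ≤ 1) ∧
      ∃ M : ℝ, 0 < M ∧ ∀ Δ : V → ℝ, (∀ i ∈ J, Δ i = 0) →
        thetaInfE F w + ENNReal.ofReal (M * (⨆ i, |Δ i|)) ≤ thetaInfE F (w + Δ)) :
    ∀ i ∉ J, F J < F (insert i J) :=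
  stmt_14_general F hF0 hmono hsub J hws
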